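/- Let d = 1 and (x,y) ∈ Π. Then either both x and y are rational, or both are irrational. -/

import Mathlib

open scoped ENNReal
open Filter

/-- Distance from `t ∈ ℝ` to the nearest integer. -/
noncomputable def nrm1 (t : ℝ) : ℝ := |t - round t|

/-- `S_ℓ(x,y) = Σ_{n≥ℓ} min_{ℓ≤m≤n} ‖mx+y‖`, valued in `[0,∞]` (case `d = 1`). -/
noncomputable def S1 (l : ℤ) (x y : ℝ) : ℝ≥0∞ :=
  ∑' n : ℕ, ⨅ m ∈ Finset.Icc l (l + n), ENNReal.ofReal (nrm1 ((m : ℝ) * x + y))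

/-- The class `𝒟` of non-increasing `ψ : ℕ → ℝ≥0` with `Σ ψ(n) = ∞` (case `d = 1`). -/
def calD1 : Set (ℕ → ℝ) := {ψ | (∀ n, 0 ≤ ψ n) ∧ Antitone ψ ∧ ¬ Summable ψ}

/-- `Π` for `d = 1`. -/
def Pi1 : Set (ℝ × ℝ) :=
  {p | ∀ ψ ∈ calD1, ∃ᶠ n : ℕ in atTop, nrm1 ((n : ℝ) * p.1 + p.2) < ψ n}

/-- The vertical fiber `Φ(x)`. -/
def Phi1 (x : ℝ) : Set ℝ := {y | (x, y) ∈ Pi1}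

/-- The horizontal fiber `Π^y`. -/
def PiY1 (y : ℝ) : Set ℝ := {x | (x, y) ∈ Pi1}

/-!
The running minimum `ψ(n) = min_{1 ≤ m ≤ n+1} ‖mx + y‖` is non-increasing and never exceeds
`‖nx + y‖` for `n ≥ 1`, so `(x, y) ∈ Π` forces `Σ ψ(n) < ∞`. If exactly one coordinate is
rational with denominator `q`, multiplying by `q` makes that coordinate an integer, and
`‖q t‖ ≤ q ‖t‖` bounds `q ψ` from below by the running minimum of `‖m (qx) + qy‖`. When `x` is
rational this is the positive constant `‖qy‖`. When `y` is rational it is the homogeneous minimum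
`δ(n) = min_{m ≤ n+1} ‖mβ‖` with `β = qx` irrational, whose series diverges: if `v = δ(n)` is
attained at `a ≤ n + 1` and `b` is the first index with `‖bβ‖ < v`, then the nonzero integer
`a·round(bβ) - b·round(aβ)` gives `b v + (n + 1) v ≥ 1`, while `δ ≥ v` on `[n, b - 1)`.
-/

lemma nrm1_nonneg (t : ℝ) : 0 ≤ nrm1 t := abs_nonneg _

lemma nrm1_le_abs_sub_intCast (t : ℝ) (z : ℤ) : nrm1 t ≤ |t - z| := round_le t z

lemma nrm1_add_intCast (t : ℝ) (z : ℤ) : nrm1 (t + z) = nrm1 t := by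
  simp only [nrm1, round_add_intCast, Int.cast_add, add_sub_add_right_eq_sub]

lemma Irrational.nrm1_pos {t : ℝ} (ht : Irrational t) : 0 < nrm1 t :=
  abs_pos.2 (sub_ne_zero.2 (ht.ne_int _))

lemma nrm1_natCast_mul_le (q : ℕ) (t : ℝ) : nrm1 (q * t) ≤ q * nrm1 t :=
  calc nrm1 (q * t) ≤ |q * t - ((q * round t : ℤ) : ℝ)| := nrm1_le_abs_sub_intCast _ _
    _ = q * nrm1 t := by push_cast; rw [← mul_sub, abs_mul, Nat.abs_cast]; rfl

lemma exists_nrm1_natCast_mul_lt (β : ℝ) {ε : ℝ} (hε : 0 < ε) :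
    ∃ m : ℕ, 0 < m ∧ nrm1 (m * β) < ε := by
  obtain ⟨N, hN⟩ := exists_nat_one_div_lt hε
  obtain ⟨m, hm, -, hle⟩ := Real.exists_nat_abs_mul_sub_round_le β N.succ_pos
  refine ⟨m, hm, hle.trans_lt (lt_of_le_of_lt ?_ hN)⟩
  gcongr
  linarith

lemma one_le_mul_nrm1_add_mul_nrm1 {β : ℝ} {a b : ℕ} (ha : 0 < a) (hab : a ≤ b)
    (hlt : nrm1 (b * β) < nrm1 (a * β)) : 1 ≤ b * nrm1 (a * β) + a * nrm1 (b * β) := by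
  set ea := a * β - round (a * β)
  set eb := b * β - round (b * β)
  have hz : ((a * round (b * β) - b * round (a * β) : ℤ) : ℝ) = b * ea - a * eb := by
    push_cast [ea, eb]; ring
  have hz0 : a * round (b * β) - b * round (a * β) ≠ 0 := by
    intro h0
    rw [h0, Int.cast_zero, eq_comm, sub_eq_zero] at hz
    have habs : (b : ℝ) * |ea| = a * |eb| := by
      rw [← Nat.abs_cast b, ← Nat.abs_cast a, ← abs_mul, ← abs_mul, hz]
    have ha' : (0 : ℝ) < a := by exact_mod_cast ha
    have hab' : (a : ℝ) ≤ b := by exact_mod_cast hab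
    change |eb| < |ea| at hlt
    nlinarith [abs_nonneg ea]
  calc (1 : ℝ) ≤ |((a * round (b * β) - b * round (a * β) : ℤ) : ℝ)| := by
        exact_mod_cast Int.one_le_abs hz0
    _ = |b * ea - a * eb| := by rw [hz]
    _ ≤ |b * ea| + |a * eb| := abs_sub _ _
    _ = b * nrm1 (a * β) + a * nrm1 (b * β) := by
        rw [abs_mul, abs_mul, Nat.abs_cast, Nat.abs_cast]; rfl

noncomputable def minNrm1 (x y : ℝ) (n : ℕ) : ℝ :=
  (Finset.Icc 1 (n + 1)).inf' (Finset.nonempty_Icc.2 (by omega)) fun m : ℕ => nrm1 (m * x + y)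

section minNrm1

variable {x y : ℝ} {n : ℕ}

lemma minNrm1_le {m : ℕ} (h1 : 1 ≤ m) (hm : m ≤ n + 1) : minNrm1 x y n ≤ nrm1 (m * x + y) :=
  Finset.inf'_le _ (Finset.mem_Icc.2 ⟨h1, hm⟩)

lemma le_minNrm1 {c : ℝ} (h : ∀ m : ℕ, 1 ≤ m → m ≤ n + 1 → c ≤ nrm1 (m * x + y)) :
    c ≤ minNrm1 x y n :=
  Finset.le_inf' _ _ fun m hm => h m (Finset.mem_Icc.1 hm).1 (Finset.mem_Icc.1 hm).2

lemma exists_nrm1_eq_minNrm1 (x y : ℝ) (n : ℕ) :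
    ∃ m : ℕ, 1 ≤ m ∧ m ≤ n + 1 ∧ nrm1 (m * x + y) = minNrm1 x y n := by
  obtain ⟨m, hm, heq⟩ := Finset.exists_mem_eq_inf' (Finset.nonempty_Icc.2 (Nat.le_add_left 1 n))
    fun m : ℕ => nrm1 (m * x + y)
  exact ⟨m, (Finset.mem_Icc.1 hm).1, (Finset.mem_Icc.1 hm).2, heq.symm⟩

lemma minNrm1_nonneg : 0 ≤ minNrm1 x y n := le_minNrm1 fun _ _ _ => nrm1_nonneg _

lemma minNrm1_antitone : Antitone (minNrm1 x y) :=
  fun k l hkl => le_minNrm1 (n := k) fun _ h1 hm => minNrm1_le (n := l) h1 (by omega)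

lemma minNrm1_pos_of_irrational (hx : Irrational x) (n : ℕ) : 0 < minNrm1 x 0 n := by
  obtain ⟨m, h1, -, heq⟩ := exists_nrm1_eq_minNrm1 x 0 n
  rw [← heq, add_zero]
  exact (hx.natCast_mul (by omega)).nrm1_pos

lemma minNrm1_natCast_mul_le (q : ℕ) (x y : ℝ) (n : ℕ) :
    minNrm1 (q * x) (q * y) n ≤ q * minNrm1 x y n := by
  obtain ⟨m, h1, hm, heq⟩ := exists_nrm1_eq_minNrm1 x y n
  calc minNrm1 (q * x) (q * y) n ≤ nrm1 (m * (q * x) + q * y) := minNrm1_le h1 hm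
    _ = nrm1 (q * (m * x + y)) := by ring_nf
    _ ≤ q * nrm1 (m * x + y) := nrm1_natCast_mul_le _ _
    _ = q * minNrm1 x y n := by rw [heq]

lemma minNrm1_add_intCast (x y : ℝ) (z : ℤ) : minNrm1 x (y + z) = minNrm1 x y := by
  funext n
  simp only [minNrm1, ← add_assoc, nrm1_add_intCast]

lemma minNrm1_intCast_left (z : ℤ) (y : ℝ) (n : ℕ) : minNrm1 z y n = nrm1 y := by
  have hshift : ∀ m : ℕ, (m : ℝ) * z + y = y + ((m * z : ℤ) : ℝ) := fun m => by push_cast; ring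
  refine le_antisymm ?_ (le_minNrm1 fun m _ _ => by rw [hshift, nrm1_add_intCast])
  simpa only [hshift, nrm1_add_intCast] using
    minNrm1_le (x := z) (y := y) le_rfl (Nat.le_add_left 1 n)

end minNrm1

lemma summable_minNrm1_of_mem_Pi1 {x y : ℝ} (h : (x, y) ∈ Pi1) : Summable (minNrm1 x y) := by
  by_contra hs
  obtain ⟨n, hn, hn1⟩ :=
    ((h _ ⟨fun _ => minNrm1_nonneg, minNrm1_antitone, hs⟩).and_eventually
      (eventually_ge_atTop 1)).exists
  exact hn.not_ge (minNrm1_le hn1 n.le_succ)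

lemma exists_one_sub_le_sum_minNrm1 {β : ℝ} {n : ℕ} (hv : 0 < minNrm1 β 0 n) :
    ∃ N, 1 - 2 * (n + 1) * minNrm1 β 0 n ≤ ∑ i ∈ Finset.range N, minNrm1 β 0 (i + n) := by
  set v := minNrm1 β 0 n
  obtain ⟨a, ha1, han, hav⟩ := exists_nrm1_eq_minNrm1 β 0 n
  rw [add_zero] at hav
  have hex := exists_nrm1_natCast_mul_lt β hv
  obtain ⟨hb0, hbv⟩ := Nat.find_spec hex
  set b := Nat.find hex
  have hbelow : ∀ m : ℕ, 1 ≤ m → m < b → v ≤ nrm1 (m * β) :=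
    fun m hm hmb => not_lt.1 fun hlt => Nat.find_min hex hmb ⟨hm, hlt⟩
  have hnb : n + 1 < b := by
    by_contra! hbn
    exact hbv.not_ge (by simpa using minNrm1_le (x := β) (y := 0) hb0 hbn)
  have hkey := one_le_mul_nrm1_add_mul_nrm1 ha1 (han.trans hnb.le) (hbv.trans_eq hav.symm)
  rw [hav] at hkey
  have hblock : ∀ i ∈ Finset.range (b - 1 - n), v ≤ minNrm1 β 0 (i + n) := fun i hi =>
    le_minNrm1 fun m hm1 hm => by
      simpa using hbelow m hm1 (by have := Finset.mem_range.1 hi; omega)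
  refine ⟨b - 1 - n, le_trans ?_ (Finset.card_nsmul_le_sum _ _ _ hblock)⟩
  have han' : (a : ℝ) ≤ n + 1 := by exact_mod_cast han
  rw [Finset.card_range, nsmul_eq_mul, Nat.cast_sub (by omega), Nat.cast_sub (by omega)]
  push_cast
  nlinarith [nrm1_nonneg (b * β)]

lemma not_summable_minNrm1_of_irrational {β : ℝ} (hβ : Irrational β) :
    ¬ Summable (minNrm1 β 0) := by
  intro hs
  set δ := minNrm1 β 0
  set tail : ℕ → ℝ := fun n => ∑' i, δ (i + n)
  have hsum_le_tail (n N : ℕ) : ∑ i ∈ Finset.range N, δ (i + n) ≤ tail n :=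
    ((summable_nat_add_iff n).2 hs).sum_le_tsum _ fun _ _ => minNrm1_nonneg
  -- `(n + 1) δ(2n) ≤ tail n` controls the term `2 (2n + 1) δ(2n)` of the bound at `2n`.
  have hbound (n : ℕ) : 1 ≤ tail (2 * n) + 4 * tail n := by
    obtain ⟨N, hN⟩ := exists_one_sub_le_sum_minNrm1 (minNrm1_pos_of_irrational hβ (2 * n))
    have hδ : (n + 1 : ℝ) * δ (2 * n) ≤ tail n := by
      have := Finset.card_nsmul_le_sum (Finset.range (n + 1)) (fun i => δ (i + n)) (δ (2 * n))
        fun i hi => minNrm1_antitone (by have := Finset.mem_range.1 hi; omega)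
      rw [Finset.card_range, nsmul_eq_mul] at this
      exact_mod_cast this.trans (hsum_le_tail n (n + 1))
    have := hsum_le_tail (2 * n) N
    push_cast at hN
    nlinarith [minNrm1_nonneg (x := β) (y := 0) (n := 2 * n)]
  have htail : Tendsto tail atTop (nhds 0) := tendsto_sum_nat_add δ
  have hdouble : Tendsto (fun n : ℕ => 2 * n) atTop atTop :=
    tendsto_id.const_mul_atTop' two_pos
  have hlim := (htail.comp hdouble).add (htail.const_mul 4)
  rw [mul_zero, add_zero] at hlim
  exact absurd (ge_of_tendsto' hlim hbound) (by norm_num)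

lemma not_summable_minNrm1_of_natCast_mul {x y : ℝ} (q : ℕ)
    (h : ¬ Summable (minNrm1 (q * x) (q * y))) : ¬ Summable (minNrm1 x y) := fun hs =>
  h ((hs.mul_left (q : ℝ)).of_nonneg_of_le (fun _ => minNrm1_nonneg)
    (minNrm1_natCast_mul_le q x y))

lemma natCast_den_mul_ratCast (r : ℚ) : (r.den : ℝ) * r = r.num := by
  exact_mod_cast r.den_mul_eq_num

lemma not_summable_minNrm1_ratCast_left (r : ℚ) {y : ℝ} (hy : Irrational y) :
    ¬ Summable (minNrm1 r y) := by
  refine not_summable_minNrm1_of_natCast_mul r.den ?_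
  rw [natCast_den_mul_ratCast, funext (minNrm1_intCast_left r.num _), summable_const_iff]
  exact (hy.natCast_mul r.den_nz).nrm1_pos.ne'

lemma not_summable_minNrm1_ratCast_right {x : ℝ} (hx : Irrational x) (r : ℚ) :
    ¬ Summable (minNrm1 x r) := by
  refine not_summable_minNrm1_of_natCast_mul r.den ?_
  rw [natCast_den_mul_ratCast, ← zero_add ((r.num : ℤ) : ℝ), minNrm1_add_intCast]
  exact not_summable_minNrm1_of_irrational (hx.natCast_mul r.den_nz)

theorem stmt19 (x y : ℝ) (h : (x, y) ∈ Pi1) :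
    (∃ q : ℚ, x = (q : ℝ)) ↔ (∃ q : ℚ, y = (q : ℝ)) := by
  have hs := summable_minNrm1_of_mem_Pi1 h
  constructor
  · rintro ⟨r, rfl⟩
    by_contra hy
    exact not_summable_minNrm1_ratCast_left r (fun ⟨q, hq⟩ => hy ⟨q, hq.symm⟩) hs
  · rintro ⟨r, rfl⟩
    by_contra hx
    exact not_summable_minNrm1_ratCast_right (fun ⟨q, hq⟩ => hx ⟨q, hq.symm⟩) r hs
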